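/- arXiv:2109.14609 — 3 statements merged into one kernel-verified Lean document; each statement's English description precedes it below -/
import Mathlib

section
/- Let H₁ be an r₁ × n₁ matrix and H₂ an r₂ × n₂ matrix, both with entries in the field with two elements F₂ = ZMod 2. Define the block matrices H_X = [ H₁ ⊗ I_{n₂} | I_{r₁} ⊗ H₂ᵀ ] (of size r₁n₂ × (n₁n₂ + r₁r₂)) and H_Z = [ I_{n₁} ⊗ H₂ | H₁ᵀ ⊗ I_{r₂} ] (of size n₁r₂ × (n₁n₂ + r₁r₂)), where ⊗ denotes the Kronecker product of matrices and I_m the m × m identity matrix. Then H_X · H_Zᵀ = 0. -/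
open Matrix Kronecker

-- Each of the two block products is `H₁ ⊗ H₂ᵀ`, by the mixed-product property of `⊗ₖ`.
theorem fromCols_kronecker_mul_transpose_fromCols_kronecker
    {R ι₁ κ₁ ι₂ κ₂ : Type*} [CommSemiring R] [Fintype ι₁] [Fintype κ₁] [Fintype ι₂] [Fintype κ₂]
    [DecidableEq ι₁] [DecidableEq κ₁] [DecidableEq ι₂] [DecidableEq κ₂]
    (H₁ : Matrix ι₁ κ₁ R) (H₂ : Matrix ι₂ κ₂ R) :
    fromCols (H₁ ⊗ₖ (1 : Matrix κ₂ κ₂ R)) ((1 : Matrix ι₁ ι₁ R) ⊗ₖ H₂ᵀ) *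
        (fromCols ((1 : Matrix κ₁ κ₁ R) ⊗ₖ H₂) (H₁ᵀ ⊗ₖ (1 : Matrix ι₂ ι₂ R)))ᵀ =
      H₁ ⊗ₖ H₂ᵀ + H₁ ⊗ₖ H₂ᵀ := by
  rw [transpose_fromCols, fromCols_mul_fromRows, ← kroneckerMap_transpose,
    ← kroneckerMap_transpose, transpose_one, transpose_one, transpose_transpose,
    ← mul_kronecker_mul, ← mul_kronecker_mul, Matrix.mul_one, Matrix.one_mul,
    Matrix.one_mul, Matrix.mul_one]

/-- For any matrices `H₁ : r₁ × n₁` and `H₂ : r₂ × n₂` over `F₂ = ZMod 2`,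
the hypergraph-product parity check matrices
`H_X = [ H₁ ⊗ I_{n₂} | I_{r₁} ⊗ H₂ᵀ ]` and `H_Z = [ I_{n₁} ⊗ H₂ | H₁ᵀ ⊗ I_{r₂} ]`
satisfy `H_X · H_Zᵀ = 0`, i.e. the hypergraph product is a valid CSS code. -/
theorem hgp_css_condition {r₁ n₁ r₂ n₂ : ℕ}
    (H₁ : Matrix (Fin r₁) (Fin n₁) (ZMod 2)) (H₂ : Matrix (Fin r₂) (Fin n₂) (ZMod 2)) :
    (Matrix.fromCols
        (H₁ ⊗ₖ (1 : Matrix (Fin n₂) (Fin n₂) (ZMod 2)))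
        ((1 : Matrix (Fin r₁) (Fin r₁) (ZMod 2)) ⊗ₖ H₂ᵀ)) *
      (Matrix.fromCols
        ((1 : Matrix (Fin n₁) (Fin n₁) (ZMod 2)) ⊗ₖ H₂)
        (H₁ᵀ ⊗ₖ (1 : Matrix (Fin r₂) (Fin r₂) (ZMod 2))))ᵀ = 0 := by
  rw [fromCols_kronecker_mul_transpose_fromCols_kronecker]
  ext i j
  exact CharTwo.add_self_eq_zero _
end

section
/- Let G₁ and G₂ be finite simple bipartite graphs whose vertex sets are ZMod n₁ and ZMod n₂ respectively (n₁, n₂ ≥ 1), with bipartitions V(G₁) = B₁ ∪ C₁ and V(G₂) = B₂ ∪ C₂. Let T be the box product G₁ □ G₂, and let T_N, T_S, T_E, T_W be the four directed-edge spanning subgraphs of T determined by the labelings (defined in the context). Then deg(T) ≤ deg(T_N) + deg(T_S) + deg(T_E) + deg(T_W) ≤ 2 · deg(T), where deg(·) denotes maximum degree. -/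
open scoped Classical

/-- Qubit vertices `(B₁ × B₂) ∪ (C₁ × C₂)` of the hypergraph product. -/
def qubitSet {n₁ n₂ : ℕ} (B₁ C₁ : Set (ZMod n₁)) (B₂ C₂ : Set (ZMod n₂)) :
    Set (ZMod n₁ × ZMod n₂) :=
  (B₁ ×ˢ B₂) ∪ (C₁ ×ˢ C₂)

/-- Stabilizer vertices `(B₁ × C₂) ∪ (C₁ × B₂)` of the hypergraph product. -/
def stabSet {n₁ n₂ : ℕ} (B₁ C₁ : Set (ZMod n₁)) (B₂ C₂ : Set (ZMod n₂)) :
    Set (ZMod n₁ × ZMod n₂) :=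
  (B₁ ×ˢ C₂) ∪ (C₁ ×ˢ B₂)

/-- The direction-`N` spanning subgraph of the box product `T = G₁ □ G₂`: vertical edges whose
stabilizer endpoint `(i, j)` and qubit endpoint `(i, j + ℓ)` (with `ℓ ∈ {1, …, n₂ - 1}`)
satisfy `ℓ ≤ n₂ / 2`, i.e. `2 * ℓ ≤ n₂`. Here `ℓ` is recovered as `(j' - j).val`. -/
def dirN {n₁ n₂ : ℕ} (G₁ : SimpleGraph (ZMod n₁)) (G₂ : SimpleGraph (ZMod n₂))
    (stab : Set (ZMod n₁ × ZMod n₂)) : SimpleGraph (ZMod n₁ × ZMod n₂) where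
  Adj p q := (G₁.boxProd G₂).Adj p q ∧ p.1 = q.1 ∧
    ((p ∈ stab ∧ 2 * (q.2 - p.2).val ≤ n₂) ∨ (q ∈ stab ∧ 2 * (p.2 - q.2).val ≤ n₂))
  symm := ⟨fun _ _ ⟨h1, h2, h3⟩ => ⟨h1.symm, h2.symm, h3.symm⟩⟩
  loopless := ⟨fun p ⟨h1, _, _⟩ => (G₁.boxProd G₂).loopless.irrefl p h1⟩

/-- The direction-`S` spanning subgraph: vertical edges with `ℓ > n₂ / 2`. -/
def dirS {n₁ n₂ : ℕ} (G₁ : SimpleGraph (ZMod n₁)) (G₂ : SimpleGraph (ZMod n₂))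
    (stab : Set (ZMod n₁ × ZMod n₂)) : SimpleGraph (ZMod n₁ × ZMod n₂) where
  Adj p q := (G₁.boxProd G₂).Adj p q ∧ p.1 = q.1 ∧
    ((p ∈ stab ∧ n₂ < 2 * (q.2 - p.2).val) ∨ (q ∈ stab ∧ n₂ < 2 * (p.2 - q.2).val))
  symm := ⟨fun _ _ ⟨h1, h2, h3⟩ => ⟨h1.symm, h2.symm, h3.symm⟩⟩
  loopless := ⟨fun p ⟨h1, _, _⟩ => (G₁.boxProd G₂).loopless.irrefl p h1⟩

/-- The direction-`E` spanning subgraph: horizontal edges whose stabilizer endpoint `(i, j)` and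
qubit endpoint `(i + ℓ, j)` satisfy `ℓ ≤ n₁ / 2`, i.e. `2 * ℓ ≤ n₁`. -/
def dirE {n₁ n₂ : ℕ} (G₁ : SimpleGraph (ZMod n₁)) (G₂ : SimpleGraph (ZMod n₂))
    (stab : Set (ZMod n₁ × ZMod n₂)) : SimpleGraph (ZMod n₁ × ZMod n₂) where
  Adj p q := (G₁.boxProd G₂).Adj p q ∧ p.2 = q.2 ∧
    ((p ∈ stab ∧ 2 * (q.1 - p.1).val ≤ n₁) ∨ (q ∈ stab ∧ 2 * (p.1 - q.1).val ≤ n₁))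
  symm := ⟨fun _ _ ⟨h1, h2, h3⟩ => ⟨h1.symm, h2.symm, h3.symm⟩⟩
  loopless := ⟨fun p ⟨h1, _, _⟩ => (G₁.boxProd G₂).loopless.irrefl p h1⟩

/-- The direction-`W` spanning subgraph: horizontal edges with `ℓ > n₁ / 2`. -/
def dirW {n₁ n₂ : ℕ} (G₁ : SimpleGraph (ZMod n₁)) (G₂ : SimpleGraph (ZMod n₂))
    (stab : Set (ZMod n₁ × ZMod n₂)) : SimpleGraph (ZMod n₁ × ZMod n₂) where
  Adj p q := (G₁.boxProd G₂).Adj p q ∧ p.2 = q.2 ∧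
    ((p ∈ stab ∧ n₁ < 2 * (q.1 - p.1).val) ∨ (q ∈ stab ∧ n₁ < 2 * (p.1 - q.1).val))
  symm := ⟨fun _ _ ⟨h1, h2, h3⟩ => ⟨h1.symm, h2.symm, h3.symm⟩⟩
  loopless := ⟨fun p ⟨h1, _, _⟩ => (G₁.boxProd G₂).loopless.irrefl p h1⟩

/-- `δ₊(G, j)`: the number of neighbors of `j` of the form `j + ℓ (mod n)` with
`0 < ℓ ≤ n / 2` (i.e. `2 * ℓ ≤ n`). -/
noncomputable def deltaPlus {n : ℕ} (G : SimpleGraph (ZMod n)) (j : ZMod n) : ℕ :=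
  {j' | G.Adj j j' ∧ 0 < (j' - j).val ∧ 2 * (j' - j).val ≤ n}.ncard

/-- `δ₋(G, j) = deg(j) - δ₊(G, j)`. -/
noncomputable def deltaMinus {n : ℕ} [NeZero n] (G : SimpleGraph (ZMod n)) (j : ZMod n) : ℕ :=
  G.degree j - deltaPlus G j

/-!
Every edge of `G₁ □ G₂` has a stabilizer endpoint, because the bipartitions make the classes of
the two endpoints alternate; so `G₁ □ G₂ ≤ T_N ⊔ T_S ⊔ T_E ⊔ T_W`, and maximum degree is
subadditive under `⊔`. Conversely `T_N` and `T_S` consist of vertical edges, so they are subgraphs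
of `⊥ □ G₂`, of maximum degree `Δ(G₂)`; likewise `T_E, T_W ≤ G₁ □ ⊥`. Since
`Δ(G₁ □ G₂) = Δ(G₁) + Δ(G₂)`, the four maximum degrees add up to at most `2 Δ(G₁ □ G₂)`.
-/

namespace SimpleGraph

variable {V α β : Type*}

lemma maxDegree_sup_le [Fintype V] (G H : SimpleGraph V) [DecidableRel G.Adj]
    [DecidableRel H.Adj] [DecidableRel (G ⊔ H).Adj] :
    (G ⊔ H).maxDegree ≤ G.maxDegree + H.maxDegree := by
  classical
  refine maxDegree_le_of_forall_degree_le _ _ fun v => ?_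
  rw [degree, neighborFinset_sup]
  exact (Finset.card_union_le _ _).trans
    (add_le_add (G.degree_le_maxDegree v) (H.degree_le_maxDegree v))

theorem maxDegree_boxProd [Fintype α] [Fintype β] [Nonempty α] [Nonempty β]
    (G : SimpleGraph α) (H : SimpleGraph β) [DecidableRel G.Adj] [DecidableRel H.Adj]
    [DecidableRel (G □ H).Adj] :
    (G □ H).maxDegree = G.maxDegree + H.maxDegree := by
  refine le_antisymm (maxDegree_le_of_forall_degree_le _ _ fun x => ?_) ?_
  · rw [degree_boxProd]
    exact add_le_add (G.degree_le_maxDegree _) (H.degree_le_maxDegree _)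
  · obtain ⟨a, ha⟩ := G.exists_maximal_degree_vertex
    obtain ⟨b, hb⟩ := H.exists_maximal_degree_vertex
    have h := (G □ H).degree_le_maxDegree (a, b)
    rwa [degree_boxProd, ← ha, ← hb] at h

lemma bot_boxProd_adj_of_fst_eq {G : SimpleGraph α} {H : SimpleGraph β} {p q : α × β}
    (h : (G □ H).Adj p q) (he : p.1 = q.1) : ((⊥ : SimpleGraph α) □ H).Adj p q := by
  rcases boxProd_adj.mp h with ⟨hG, -⟩ | hH
  · exact absurd he hG.ne
  · exact boxProd_adj.mpr (Or.inr hH)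

lemma boxProd_bot_adj_of_snd_eq {G : SimpleGraph α} {H : SimpleGraph β} {p q : α × β}
    (h : (G □ H).Adj p q) (he : p.2 = q.2) : (G □ (⊥ : SimpleGraph β)).Adj p q := by
  rcases boxProd_adj.mp h with hG | ⟨hH, -⟩
  · exact boxProd_adj.mpr (Or.inl hG)
  · exact absurd he hH.ne

end SimpleGraph

open SimpleGraph

section

variable {n₁ n₂ : ℕ} {G₁ : SimpleGraph (ZMod n₁)} {G₂ : SimpleGraph (ZMod n₂)}
  {stab : Set (ZMod n₁ × ZMod n₂)}

lemma dirN_le_bot_boxProd : dirN G₁ G₂ stab ≤ (⊥ : SimpleGraph (ZMod n₁)).boxProd G₂ :=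
  fun _ _ h => bot_boxProd_adj_of_fst_eq h.1 h.2.1

lemma dirS_le_bot_boxProd : dirS G₁ G₂ stab ≤ (⊥ : SimpleGraph (ZMod n₁)).boxProd G₂ :=
  fun _ _ h => bot_boxProd_adj_of_fst_eq h.1 h.2.1

lemma dirE_le_boxProd_bot : dirE G₁ G₂ stab ≤ G₁.boxProd (⊥ : SimpleGraph (ZMod n₂)) :=
  fun _ _ h => boxProd_bot_adj_of_snd_eq h.1 h.2.1

lemma dirW_le_boxProd_bot : dirW G₁ G₂ stab ≤ G₁.boxProd (⊥ : SimpleGraph (ZMod n₂)) :=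
  fun _ _ h => boxProd_bot_adj_of_snd_eq h.1 h.2.1

lemma mem_stabSet_or_mem_stabSet_of_boxProd_adj {B₁ C₁ : Set (ZMod n₁)} {B₂ C₂ : Set (ZMod n₂)}
    (hcover₁ : B₁ ∪ C₁ = Set.univ) (hcover₂ : B₂ ∪ C₂ = Set.univ)
    (hbip₁ : ∀ u v, G₁.Adj u v → (u ∈ B₁ ∧ v ∈ C₁) ∨ (u ∈ C₁ ∧ v ∈ B₁))
    (hbip₂ : ∀ u v, G₂.Adj u v → (u ∈ B₂ ∧ v ∈ C₂) ∨ (u ∈ C₂ ∧ v ∈ B₂))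
    ⦃p q : ZMod n₁ × ZMod n₂⦄ (h : (G₁.boxProd G₂).Adj p q) :
    p ∈ stabSet B₁ C₁ B₂ C₂ ∨ q ∈ stabSet B₁ C₁ B₂ C₂ := by
  have hp₁ : p.1 ∈ B₁ ∪ C₁ := hcover₁ ▸ Set.mem_univ _
  have hp₂ : p.2 ∈ B₂ ∪ C₂ := hcover₂ ▸ Set.mem_univ _
  simp only [stabSet, Set.mem_union, Set.mem_prod] at hp₁ hp₂ ⊢
  rcases boxProd_adj.mp h with ⟨h₁, he⟩ | ⟨h₂, he⟩
  · rw [← he]; rcases hbip₁ _ _ h₁ with h | h <;> tauto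
  · rw [← he]; rcases hbip₂ _ _ h₂ with h | h <;> tauto

lemma boxProd_le_dirN_sup_dirS_sup_dirE_sup_dirW
    (hstab : ∀ ⦃p q⦄, (G₁.boxProd G₂).Adj p q → p ∈ stab ∨ q ∈ stab) :
    G₁.boxProd G₂ ≤ dirN G₁ G₂ stab ⊔ dirS G₁ G₂ stab ⊔ dirE G₁ G₂ stab ⊔ dirW G₁ G₂ stab := by
  intro p q h
  have hs := hstab h
  simp only [sup_adj, dirN, dirS, dirE, dirW]
  rcases boxProd_adj.mp h with ⟨-, he⟩ | ⟨-, he⟩ <;> grind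

end

theorem direction_subgraphs_maxDegree_bounds_general {n₁ n₂ : ℕ} [NeZero n₁] [NeZero n₂]
    (G₁ : SimpleGraph (ZMod n₁)) (G₂ : SimpleGraph (ZMod n₂))
    (B₁ C₁ : Set (ZMod n₁)) (B₂ C₂ : Set (ZMod n₂))
    (hcover₁ : B₁ ∪ C₁ = Set.univ)
    (hcover₂ : B₂ ∪ C₂ = Set.univ)
    (hbip₁ : ∀ u v, G₁.Adj u v → (u ∈ B₁ ∧ v ∈ C₁) ∨ (u ∈ C₁ ∧ v ∈ B₁))
    (hbip₂ : ∀ u v, G₂.Adj u v → (u ∈ B₂ ∧ v ∈ C₂) ∨ (u ∈ C₂ ∧ v ∈ B₂))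
    :
    (G₁.boxProd G₂).maxDegree ≤
        (dirN G₁ G₂ (stabSet B₁ C₁ B₂ C₂)).maxDegree +
        (dirS G₁ G₂ (stabSet B₁ C₁ B₂ C₂)).maxDegree +
        (dirE G₁ G₂ (stabSet B₁ C₁ B₂ C₂)).maxDegree +
        (dirW G₁ G₂ (stabSet B₁ C₁ B₂ C₂)).maxDegree ∧
      (dirN G₁ G₂ (stabSet B₁ C₁ B₂ C₂)).maxDegree +
        (dirS G₁ G₂ (stabSet B₁ C₁ B₂ C₂)).maxDegree +
        (dirE G₁ G₂ (stabSet B₁ C₁ B₂ C₂)).maxDegree +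
        (dirW G₁ G₂ (stabSet B₁ C₁ B₂ C₂)).maxDegree ≤
      2 * (G₁.boxProd G₂).maxDegree := by
  set stab := stabSet B₁ C₁ B₂ C₂
  have hcovered : G₁.boxProd G₂ ≤
      dirN G₁ G₂ stab ⊔ dirS G₁ G₂ stab ⊔ dirE G₁ G₂ stab ⊔ dirW G₁ G₂ stab :=
    boxProd_le_dirN_sup_dirS_sup_dirE_sup_dirW <|
      mem_stabSet_or_mem_stabSet_of_boxProd_adj hcover₁ hcover₂ hbip₁ hbip₂
  constructor
  · calc (G₁.boxProd G₂).maxDegree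
        ≤ (dirN G₁ G₂ stab ⊔ dirS G₁ G₂ stab ⊔ dirE G₁ G₂ stab ⊔ dirW G₁ G₂ stab).maxDegree :=
          maxDegree_mono hcovered
      _ ≤ _ := by grw [maxDegree_sup_le, maxDegree_sup_le, maxDegree_sup_le]
  · calc _ ≤ ((⊥ : SimpleGraph (ZMod n₁)).boxProd G₂).maxDegree +
          ((⊥ : SimpleGraph (ZMod n₁)).boxProd G₂).maxDegree +
          (G₁.boxProd (⊥ : SimpleGraph (ZMod n₂))).maxDegree +
          (G₁.boxProd (⊥ : SimpleGraph (ZMod n₂))).maxDegree := by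
          gcongr
          exacts [dirN_le_bot_boxProd, dirS_le_bot_boxProd, dirE_le_boxProd_bot,
            dirW_le_boxProd_bot]
      _ = 2 * (G₁.boxProd G₂).maxDegree := by
          simp only [maxDegree_boxProd, maxDegree_bot_eq_zero]
          ring

/-- Lemma 4 of the paper, two-sided bound. For bipartite input graphs `G₁`,
`G₂` on `ZMod n₁`, `ZMod n₂` with the box product `T = G₁ □ G₂` and its four directed-edge
spanning subgraphs `T_N, T_S, T_E, T_W`, we have
`deg(T) ≤ deg(T_N) + deg(T_S) + deg(T_E) + deg(T_W) ≤ 2 · deg(T)`. -/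
theorem direction_subgraphs_maxDegree_bounds {n₁ n₂ : ℕ} [NeZero n₁] [NeZero n₂]
    (G₁ : SimpleGraph (ZMod n₁)) (G₂ : SimpleGraph (ZMod n₂))
    (B₁ C₁ : Set (ZMod n₁)) (B₂ C₂ : Set (ZMod n₂))
    (hcover₁ : B₁ ∪ C₁ = Set.univ) (hdisj₁ : Disjoint B₁ C₁)
    (hcover₂ : B₂ ∪ C₂ = Set.univ) (hdisj₂ : Disjoint B₂ C₂)
    (hbip₁ : ∀ u v, G₁.Adj u v → (u ∈ B₁ ∧ v ∈ C₁) ∨ (u ∈ C₁ ∧ v ∈ B₁))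
    (hbip₂ : ∀ u v, G₂.Adj u v → (u ∈ B₂ ∧ v ∈ C₂) ∨ (u ∈ C₂ ∧ v ∈ B₂))
    :
    (G₁.boxProd G₂).maxDegree ≤
        (dirN G₁ G₂ (stabSet B₁ C₁ B₂ C₂)).maxDegree +
        (dirS G₁ G₂ (stabSet B₁ C₁ B₂ C₂)).maxDegree +
        (dirE G₁ G₂ (stabSet B₁ C₁ B₂ C₂)).maxDegree +
        (dirW G₁ G₂ (stabSet B₁ C₁ B₂ C₂)).maxDegree ∧
      (dirN G₁ G₂ (stabSet B₁ C₁ B₂ C₂)).maxDegree +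
        (dirS G₁ G₂ (stabSet B₁ C₁ B₂ C₂)).maxDegree +
        (dirE G₁ G₂ (stabSet B₁ C₁ B₂ C₂)).maxDegree +
        (dirW G₁ G₂ (stabSet B₁ C₁ B₂ C₂)).maxDegree ≤
      2 * (G₁.boxProd G₂).maxDegree :=
  direction_subgraphs_maxDegree_bounds_general G₁ G₂ B₁ C₁ B₂ C₂ hcover₁ hcover₂ hbip₁ hbip₂
end

section
/- Let G be a finite simple graph with vertex set ZMod n (n ≥ 1). For a vertex i, let δ₊(i) be the number of neighbors of i of the form i + ℓ (mod n) with 0 < ℓ ≤ n/2, and let δ₋(i) = deg(i) − δ₊(i). Suppose every vertex of G has even degree and the labeling is balanced, i.e., δ₊(i) − δ₋(i) equals deg(i) mod 2 for every vertex i. Let G₂ = G play the role of the second input graph in the directed-edge decomposition of the box product T = G₁ □ G₂ (with G₁ any finite simple bipartite graph on ZMod n₁ and G₂ bipartite with parts B₂, C₂). Then the maximum degrees of the vertical direction subgraphs satisfy deg(T_N) ≤ deg(G₂)/2 and deg(T_S) ≤ deg(G₂)/2; in particular deg(T_N) + deg(T_S) ≤ deg(G₂). -/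
open scoped Classical

/-!
Even degree and balance give every vertex `j` of `G₂` exactly `deg j / 2` forward neighbours
(step `ℓ ≤ n₂ / 2`) and `deg j / 2` backward ones (step `ℓ > n₂ / 2`). Since reversing an edge
turns `ℓ` into `n₂ - ℓ`, counting all darts shows that no edge has step exactly `n₂ / 2`.
The two ends of a vertical edge of `T` are never both stabilizers, so a stabilizer vertex
`(i, j)` meets `T_N` only along forward edges of `j` and `T_S` only along backward ones, and a
qubit vertex the other way round; either way its degree is at most `deg j / 2`.
-/

open Finset SimpleGraph

section Circulant

variable {n : ℕ} [NeZero n]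

lemma ZMod.val_sub_swap {a b : ZMod n} (h : a ≠ b) : (b - a).val = n - (a - b).val := by
  have : NeZero (a - b) := ⟨sub_ne_zero.mpr h⟩
  rw [← neg_sub, ZMod.val_neg_of_ne_zero]

noncomputable def forwardNeighbors (G : SimpleGraph (ZMod n)) (j : ZMod n) : Finset (ZMod n) :=
  {j' | G.Adj j j' ∧ 2 * (j' - j).val ≤ n}

noncomputable def backwardNeighbors (G : SimpleGraph (ZMod n)) (j : ZMod n) : Finset (ZMod n) :=
  {j' | G.Adj j j' ∧ n < 2 * (j' - j).val}

variable {G : SimpleGraph (ZMod n)}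

lemma card_forwardNeighbors (j : ZMod n) : #(forwardNeighbors G j) = deltaPlus G j := by
  rw [deltaPlus, ← Set.ncard_coe_finset]
  congr 1
  ext j'
  simp only [forwardNeighbors, coe_filter, mem_univ, true_and, Set.mem_ofPred_eq]
  constructor
  · rintro ⟨hadj, hle⟩
    exact ⟨hadj, ZMod.val_pos.mpr (sub_ne_zero.mpr (G.ne_of_adj hadj).symm), hle⟩
  · rintro ⟨hadj, -, hle⟩
    exact ⟨hadj, hle⟩

lemma card_forwardNeighbors_add_card_backwardNeighbors (j : ZMod n) :
    #(forwardNeighbors G j) + #(backwardNeighbors G j) = G.degree j := by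
  rw [← card_neighborFinset_eq_degree,
    ← card_filter_add_card_filter_not (s := G.neighborFinset j) (fun j' => 2 * (j' - j).val ≤ n),
    neighborFinset_eq_filter, filter_filter, filter_filter]
  simp only [not_le]
  rfl

lemma card_forwardNeighbors_eq_card_backwardNeighbors {j : ZMod n} (heven : Even (G.degree j))
    (hbal : (deltaPlus G j : ℤ) - (deltaMinus G j : ℤ) = (G.degree j : ℤ) % 2) :
    #(forwardNeighbors G j) = #(backwardNeighbors G j) := by
  have hsplit := card_forwardNeighbors_add_card_backwardNeighbors (G := G) j
  obtain ⟨k, hk⟩ := heven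
  rw [deltaMinus, ← card_forwardNeighbors] at hbal
  omega

lemma sum_card_backwardNeighbors :
    ∑ j, #(backwardNeighbors G j) = ∑ j, #{j' | G.Adj j j' ∧ 2 * (j' - j).val < n} := by
  simp only [backwardNeighbors, card_filter]
  rw [sum_comm]
  refine sum_congr rfl fun j _ => sum_congr rfl fun j' _ => ?_
  by_cases hadj : G.Adj j j'
  · have hswap := ZMod.val_sub_swap (G.ne_of_adj hadj)
    have hlt := ZMod.val_lt (j' - j)
    simp only [hadj, hadj.symm, true_and]
    exact if_congr ⟨fun _ => by omega, fun _ => by omega⟩ rfl rfl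
  · have hadj' : ¬G.Adj j' j := fun h => hadj h.symm
    simp [hadj, hadj']

/-- Balance makes the steps `ℓ < n / 2` as numerous as the backward steps, i.e. as the forward
steps `ℓ ≤ n / 2`; so the self-reverse step `ℓ = n / 2` never occurs. -/
lemma two_mul_val_sub_ne_of_adj (hbal : ∀ j, #(forwardNeighbors G j) = #(backwardNeighbors G j))
    {j j' : ZMod n} (hadj : G.Adj j j') : 2 * (j' - j).val ≠ n := by
  intro hmid
  let short (a : ZMod n) : Finset (ZMod n) := {b | G.Adj a b ∧ 2 * (b - a).val < n}
  have hsub (a : ZMod n) : short a ⊆ forwardNeighbors G a := fun b hb => by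
    simp only [short, forwardNeighbors, mem_filter, mem_univ, true_and] at hb ⊢
    exact ⟨hb.1, hb.2.le⟩
  have hsum : ∑ a, #(short a) = ∑ a, #(forwardNeighbors G a) := by
    rw [← sum_card_backwardNeighbors]
    exact sum_congr rfl fun a _ => (hbal a).symm
  have hcard := (sum_eq_sum_iff_of_le fun a _ => card_le_card (hsub a)).mp hsum j (mem_univ j)
  have hj' : j' ∈ forwardNeighbors G j := by simp [forwardNeighbors, hadj, hmid]
  rw [← eq_of_subset_of_card_le (hsub j) hcard.ge] at hj'
  simp [short, hmid] at hj'

end Circulant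

section BoxProduct

lemma SimpleGraph.degree_le_card_of_adj_imp_snd_mem {α β : Type*} [Fintype α] [Fintype β]
    {H : SimpleGraph (α × β)} {p : α × β} {s : Finset β}
    (h : ∀ q, H.Adj p q → q.1 = p.1 ∧ q.2 ∈ s) : H.degree p ≤ #s := by
  rw [← card_neighborFinset_eq_degree]
  refine card_le_card_of_injOn Prod.snd (fun q hq => (h q ((mem_neighborFinset _ _ _).mp hq)).2) ?_
  intro q hq q' hq' hsnd
  exact Prod.ext ((h q ((mem_neighborFinset _ _ _).mp hq)).1.trans
    (h q' ((mem_neighborFinset _ _ _).mp hq')).1.symm) hsnd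

lemma SimpleGraph.boxProd_adj_snd_of_fst_eq {α β : Type*} {G₁ : SimpleGraph α}
    {G₂ : SimpleGraph β} {p q : α × β} (h : (G₁ □ G₂).Adj p q) (h1 : p.1 = q.1) :
    G₂.Adj p.2 q.2 := by
  rcases boxProd_adj.mp h with ⟨hadj, -⟩ | ⟨hadj, -⟩
  · exact absurd (h1 ▸ hadj) (G₁.loopless.irrefl _)
  · exact hadj

lemma notMem_stabSet_of_adj {n₁ n₂ : ℕ} {G₂ : SimpleGraph (ZMod n₂)}
    {B₁ C₁ : Set (ZMod n₁)} {B₂ C₂ : Set (ZMod n₂)} (hdisj₁ : Disjoint B₁ C₁)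
    (hdisj₂ : Disjoint B₂ C₂)
    (hbip₂ : ∀ u v, G₂.Adj u v → (u ∈ B₂ ∧ v ∈ C₂) ∨ (u ∈ C₂ ∧ v ∈ B₂))
    {p q : ZMod n₁ × ZMod n₂} (h1 : p.1 = q.1) (hadj : G₂.Adj p.2 q.2)
    (hp : p ∈ stabSet B₁ C₁ B₂ C₂) : q ∉ stabSet B₁ C₁ B₂ C₂ := by
  have hB₁ : ∀ x, x ∈ B₁ → x ∉ C₁ := fun _ h => Set.disjoint_left.mp hdisj₁ h
  have hB₂ : ∀ x, x ∈ B₂ → x ∉ C₂ := fun _ h => Set.disjoint_left.mp hdisj₂ h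
  simp only [stabSet, Set.mem_union, Set.mem_prod, ← h1] at hp ⊢
  rcases hbip₂ _ _ hadj with ⟨hp2, hq2⟩ | ⟨hp2, hq2⟩
  · have := hB₂ _ hp2; have := hB₁ p.1; tauto
  · have := hB₂ _ hq2; have := hB₁ p.1; tauto

variable {n₁ n₂ : ℕ} [NeZero n₂] {G₁ : SimpleGraph (ZMod n₁)}
  {G₂ : SimpleGraph (ZMod n₂)} {stab : Set (ZMod n₁ × ZMod n₂)}

lemma fst_eq_and_snd_mem_of_dirN_adj
    (hstab : ∀ p q, p.1 = q.1 → G₂.Adj p.2 q.2 → p ∈ stab → q ∉ stab)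
    (hmid : ∀ j j', G₂.Adj j j' → 2 * (j' - j).val ≠ n₂) {p q : ZMod n₁ × ZMod n₂}
    (h : (dirN G₁ G₂ stab).Adj p q) :
    q.1 = p.1 ∧
      q.2 ∈ if p ∈ stab then forwardNeighbors G₂ p.2 else backwardNeighbors G₂ p.2 := by
  obtain ⟨hbox, h1, hdir⟩ := h
  have hadj := boxProd_adj_snd_of_fst_eq hbox h1
  refine ⟨h1.symm, ?_⟩
  split_ifs with hp
  · rcases hdir with ⟨-, hle⟩ | ⟨hq, -⟩
    · simp [forwardNeighbors, hadj, hle]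
    · exact absurd hq (hstab p q h1 hadj hp)
  · rcases hdir with ⟨hp', -⟩ | ⟨-, hle⟩
    · exact absurd hp' hp
    · have hswap := ZMod.val_sub_swap (G₂.ne_of_adj hadj)
      have hne := hmid _ _ hadj.symm
      simp only [backwardNeighbors, mem_filter, mem_univ, hadj, true_and]
      omega

lemma fst_eq_and_snd_mem_of_dirS_adj
    (hstab : ∀ p q, p.1 = q.1 → G₂.Adj p.2 q.2 → p ∈ stab → q ∉ stab)
    {p q : ZMod n₁ × ZMod n₂} (h : (dirS G₁ G₂ stab).Adj p q) :
    q.1 = p.1 ∧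
      q.2 ∈ if p ∈ stab then backwardNeighbors G₂ p.2 else forwardNeighbors G₂ p.2 := by
  obtain ⟨hbox, h1, hdir⟩ := h
  have hadj := boxProd_adj_snd_of_fst_eq hbox h1
  refine ⟨h1.symm, ?_⟩
  split_ifs with hp
  · rcases hdir with ⟨-, hlt⟩ | ⟨hq, -⟩
    · simp [backwardNeighbors, hadj, hlt]
    · exact absurd hq (hstab p q h1 hadj hp)
  · rcases hdir with ⟨hp', -⟩ | ⟨-, hlt⟩
    · exact absurd hp' hp
    · have hswap := ZMod.val_sub_swap (G₂.ne_of_adj hadj)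
      have hval := ZMod.val_lt (p.2 - q.2)
      simp only [forwardNeighbors, mem_filter, mem_univ, hadj, true_and]
      omega

variable [NeZero n₁]

lemma dirN_degree_le_half (hstab : ∀ p q, p.1 = q.1 → G₂.Adj p.2 q.2 → p ∈ stab → q ∉ stab)
    (hbal : ∀ j, #(forwardNeighbors G₂ j) = #(backwardNeighbors G₂ j)) (p : ZMod n₁ × ZMod n₂) :
    (dirN G₁ G₂ stab).degree p ≤ G₂.degree p.2 / 2 := by
  have hdeg := degree_le_card_of_adj_imp_snd_mem (p := p) fun q =>
    fst_eq_and_snd_mem_of_dirN_adj (G₁ := G₁) hstab (fun _ _ => two_mul_val_sub_ne_of_adj hbal)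
      (q := q)
  have hsplit := card_forwardNeighbors_add_card_backwardNeighbors (G := G₂) p.2
  have := hbal p.2
  split_ifs at hdeg <;> omega

lemma dirS_degree_le_half (hstab : ∀ p q, p.1 = q.1 → G₂.Adj p.2 q.2 → p ∈ stab → q ∉ stab)
    (hbal : ∀ j, #(forwardNeighbors G₂ j) = #(backwardNeighbors G₂ j)) (p : ZMod n₁ × ZMod n₂) :
    (dirS G₁ G₂ stab).degree p ≤ G₂.degree p.2 / 2 := by
  have hdeg := degree_le_card_of_adj_imp_snd_mem (p := p) fun q =>
    fst_eq_and_snd_mem_of_dirS_adj (G₁ := G₁) hstab (q := q)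
  have hsplit := card_forwardNeighbors_add_card_backwardNeighbors (G := G₂) p.2
  have := hbal p.2
  split_ifs at hdeg <;> omega

end BoxProduct

theorem vertical_direction_maxDegree_bound_general {n₁ n₂ : ℕ} [NeZero n₁] [NeZero n₂]
    (G₁ : SimpleGraph (ZMod n₁)) (G₂ : SimpleGraph (ZMod n₂))
    (B₁ C₁ : Set (ZMod n₁)) (B₂ C₂ : Set (ZMod n₂))
    (hdisj₁ : Disjoint B₁ C₁)
    (hdisj₂ : Disjoint B₂ C₂)
    (hbip₂ : ∀ u v, G₂.Adj u v → (u ∈ B₂ ∧ v ∈ C₂) ∨ (u ∈ C₂ ∧ v ∈ B₂))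
    (heven : ∀ j : ZMod n₂, Even (G₂.degree j))
    (hbal : ∀ j : ZMod n₂,
      (deltaPlus G₂ j : ℤ) - (deltaMinus G₂ j : ℤ) = (G₂.degree j : ℤ) % 2) :
    (dirN G₁ G₂ (stabSet B₁ C₁ B₂ C₂)).maxDegree ≤ G₂.maxDegree / 2 ∧
    (dirS G₁ G₂ (stabSet B₁ C₁ B₂ C₂)).maxDegree ≤ G₂.maxDegree / 2 ∧
    (dirN G₁ G₂ (stabSet B₁ C₁ B₂ C₂)).maxDegree +
        (dirS G₁ G₂ (stabSet B₁ C₁ B₂ C₂)).maxDegree ≤ G₂.maxDegree := by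
  have hbalanced : ∀ j, #(forwardNeighbors G₂ j) = #(backwardNeighbors G₂ j) := fun j =>
    card_forwardNeighbors_eq_card_backwardNeighbors (heven j) (hbal j)
  have hstab : ∀ p q, p.1 = q.1 → G₂.Adj p.2 q.2 →
      p ∈ stabSet B₁ C₁ B₂ C₂ → q ∉ stabSet B₁ C₁ B₂ C₂ := fun _ _ =>
    notMem_stabSet_of_adj hdisj₁ hdisj₂ hbip₂
  have hhalf : ∀ p : ZMod n₁ × ZMod n₂, G₂.degree p.2 / 2 ≤ G₂.maxDegree / 2 := fun p =>
    Nat.div_le_div_right (G₂.degree_le_maxDegree p.2)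
  have hN := maxDegree_le_of_forall_degree_le _ _ fun p =>
    (dirN_degree_le_half (G₁ := G₁) hstab hbalanced p).trans (hhalf p)
  have hS := maxDegree_le_of_forall_degree_le _ _ fun p =>
    (dirS_degree_le_half (G₁ := G₁) hstab hbalanced p).trans (hhalf p)
  exact ⟨hN, hS, by omega⟩

/-- If every vertex of `G₂` has even degree and the labeling of `G₂` by
`ZMod n₂` is balanced (`δ₊(j) − δ₋(j) = deg(j) mod 2` for every vertex `j`), then the vertical
direction subgraphs of `T = G₁ □ G₂` satisfy `deg(T_N) ≤ deg(G₂)/2` and `deg(T_S) ≤ deg(G₂)/2`;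
in particular `deg(T_N) + deg(T_S) ≤ deg(G₂)`. -/
theorem vertical_direction_maxDegree_bound {n₁ n₂ : ℕ} [NeZero n₁] [NeZero n₂]
    (G₁ : SimpleGraph (ZMod n₁)) (G₂ : SimpleGraph (ZMod n₂))
    (B₁ C₁ : Set (ZMod n₁)) (B₂ C₂ : Set (ZMod n₂))
    (hcover₁ : B₁ ∪ C₁ = Set.univ) (hdisj₁ : Disjoint B₁ C₁)
    (hcover₂ : B₂ ∪ C₂ = Set.univ) (hdisj₂ : Disjoint B₂ C₂)
    (hbip₁ : ∀ u v, G₁.Adj u v → (u ∈ B₁ ∧ v ∈ C₁) ∨ (u ∈ C₁ ∧ v ∈ B₁))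
    (hbip₂ : ∀ u v, G₂.Adj u v → (u ∈ B₂ ∧ v ∈ C₂) ∨ (u ∈ C₂ ∧ v ∈ B₂))
    (heven : ∀ j : ZMod n₂, Even (G₂.degree j))
    (hbal : ∀ j : ZMod n₂,
      (deltaPlus G₂ j : ℤ) - (deltaMinus G₂ j : ℤ) = (G₂.degree j : ℤ) % 2) :
    (dirN G₁ G₂ (stabSet B₁ C₁ B₂ C₂)).maxDegree ≤ G₂.maxDegree / 2 ∧
    (dirS G₁ G₂ (stabSet B₁ C₁ B₂ C₂)).maxDegree ≤ G₂.maxDegree / 2 ∧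
    (dirN G₁ G₂ (stabSet B₁ C₁ B₂ C₂)).maxDegree +
        (dirS G₁ G₂ (stabSet B₁ C₁ B₂ C₂)).maxDegree ≤ G₂.maxDegree :=
  vertical_direction_maxDegree_bound_general G₁ G₂ B₁ C₁ B₂ C₂ hdisj₁ hdisj₂ hbip₂ heven hbal
end
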